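/- arXiv:1008.4569 — 4 statements merged into one kernel-verified Lean document; each statement's English description precedes it below -/
import Mathlib

section
/- Let P₁ and P₂ be families of nonempty sets (P₁)_t, (P₂)_t ⊂ C([0,∞); E₀) indexed by t ∈ ℝ, each (Pᵢ)_t compact in C([0,∞); E₀). Suppose both P₁ and P₂ are pullback D-attracting for a trajectory brochette H⁺, i.e. for every D ∈ D and t ∈ ℝ, sup_{u∈H_τ(D)} inf_{v∈(Pᵢ)_t} ‖T(t−τ)u − v‖_{C([0,∞);E₀)} → 0 as τ → −∞. Then the intersection brochette (P₁ ∩ P₂)_t = (P₁)_t ∩ (P₂)_t is also pullback D-attracting. -/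
/-- `X` plays the role of the metric space `C([0,∞); E₀)` of trajectories,
`T h` the translation operator, `ev0 u` the value `u(0) ∈ E`,
`H τ` the trajectory space `H⁺_τ`, and `𝒟` the class of brochettes over `E`.
A brochette `P` is pullback `𝒟`-attracting if for every `D ∈ 𝒟`, `t ∈ ℝ` and `ε > 0`,
for all `τ` close enough to `-∞` every `u ∈ H_τ(D)` satisfies
`inf_{v ∈ P_t} dist (T(t-τ)u) v < ε`. -/
def PullbackAttracting {X E : Type*} [MetricSpace X]
    (T : ℝ → X → X) (ev0 : X → E) (H : ℝ → Set X) (𝒟 : Set (ℝ → Set E))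
    (P : ℝ → Set X) : Prop :=
  ∀ D ∈ 𝒟, ∀ t : ℝ, ∀ ε > (0:ℝ), ∃ τ₁ : ℝ, ∀ τ ≤ τ₁,
    ∀ u ∈ {u ∈ H τ | ev0 u ∈ D τ}, ∃ v ∈ P t, dist (T (t - τ) u) v < ε

open Metric

/- The part `C` of `K₁` lying `ε/2`-away from `K₁ ∩ K₂` is compact and disjoint from `K₂`, so
some `r`-thickenings of `C` and `K₂` are disjoint. A point `δ`-close to both `K₁` and `K₂`, with
`δ = min r (ε/2)`, is therefore `δ`-close to a point of `K₁ \ C`, hence `ε`-close to `K₁ ∩ K₂`. -/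
theorem IsCompact.exists_thickening_inter_subset {X : Type*} [PseudoMetricSpace X]
    {K₁ K₂ : Set X} (hK₁ : IsCompact K₁) (hK₂ : IsClosed K₂) {ε : ℝ} (hε : 0 < ε) :
    ∃ δ > 0, thickening δ K₁ ∩ thickening δ K₂ ⊆ thickening ε (K₁ ∩ K₂) := by
  set C := K₁ \ thickening (ε / 2) (K₁ ∩ K₂)
  have hC_disj : Disjoint C K₂ := Set.disjoint_left.2 fun c ⟨hc₁, hc_far⟩ hc₂ =>
    hc_far (self_subset_thickening (half_pos hε) _ ⟨hc₁, hc₂⟩)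
  obtain ⟨r, hr, hsep⟩ := hC_disj.exists_thickenings (hK₁.diff isOpen_thickening) hK₂
  refine ⟨min r (ε / 2), lt_min hr (half_pos hε), fun x ⟨hx₁, hx₂⟩ => ?_⟩
  obtain ⟨v, hv, hxv⟩ := mem_thickening_iff.1 hx₁
  by_cases hv_near : v ∈ thickening (ε / 2) (K₁ ∩ K₂)
  · have hx : x ∈ thickening (min r (ε / 2) + ε / 2) (K₁ ∩ K₂) :=
      thickening_thickening_subset _ _ _ (mem_thickening_iff.2 ⟨v, hv_near, hxv⟩)
    exact thickening_mono (by linarith [min_le_right r (ε / 2)]) _ hx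
  · have hxC : x ∈ thickening r C :=
      mem_thickening_iff.2 ⟨v, ⟨hv, hv_near⟩, hxv.trans_le (min_le_left _ _)⟩
    exact (Set.disjoint_left.1 hsep hxC (thickening_mono (min_le_left _ _) _ hx₂)).elim

/-- Lemma 3.12(b): the intersection of two pullback `𝒟`-attracting brochettes with
compact sections is again pullback `𝒟`-attracting. -/
theorem stmt2 {X E : Type*} [MetricSpace X]
    (T : ℝ → X → X) (ev0 : X → E) (H : ℝ → Set X) (𝒟 : Set (ℝ → Set E))
    (P₁ P₂ : ℝ → Set X)
    (hc1 : ∀ t, IsCompact (P₁ t)) (hc2 : ∀ t, IsCompact (P₂ t))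
    (ha1 : PullbackAttracting T ev0 H 𝒟 P₁)
    (ha2 : PullbackAttracting T ev0 H 𝒟 P₂) :
    PullbackAttracting T ev0 H 𝒟 (fun t => P₁ t ∩ P₂ t) := by
  intro D hD t ε hε
  obtain ⟨δ, hδ, hsub⟩ := (hc1 t).exists_thickening_inter_subset (hc2 t).isClosed hε
  obtain ⟨τ₁, hτ₁⟩ := ha1 D hD t δ hδ
  obtain ⟨τ₂, hτ₂⟩ := ha2 D hD t δ hδ
  refine ⟨min τ₁ τ₂, fun τ hτ u hu => mem_thickening_iff.1 (hsub ⟨?_, ?_⟩)⟩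
  · exact mem_thickening_iff.2 (hτ₁ τ (hτ.trans (min_le_left _ _)) u hu)
  · exact mem_thickening_iff.2 (hτ₂ τ (hτ.trans (min_le_right _ _)) u hu)
end

section
/- A minimal pullback trajectory D-semiattractor is a minimal pullback trajectory D-attractor: if U is a brochette that is a pullback trajectory D-semiattractor (T-compact, T(h)U ⊂ U for h ≥ 0, pullback D-attracting) and is contained in every pullback trajectory D-semiattractor, then T(h)U = U for all h ≥ 0. -/
/-- `X` models the trajectory space `C([0,∞);E₀)` (with its Fréchet metric), `evE u s`
is the value `u(s) ∈ E`, `T` the translation semigroup, `H` the trajectory brochette,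
`𝒟` a class of brochettes over `E`.  A brochette `P` is `𝒯`-compact if each `P_t` is
compact and trajectories in `P_t` are bounded in `E` by a continuous function `φ(t,·)`. -/
def TCompact {X E : Type*} [MetricSpace X] [NormedAddCommGroup E]
    (evE : X → ℝ → E) (P : ℝ → Set X) : Prop :=
  (∀ t, IsCompact (P t)) ∧
    ∃ φ : ℝ → ℝ → ℝ, (∀ t, Continuous (φ t)) ∧
      ∀ t, ∀ u ∈ P t, ∀ s : ℝ, 0 ≤ s → ‖evE u s‖ ≤ φ t s

/-- Pullback trajectory `𝒟`-semiattractor: `𝒯`-compact, shift semi-invariant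
(`T(h)P_{t-h} ⊆ P_t` for `h ≥ 0`), and pullback `𝒟`-attracting. -/
def IsPTSA {X E : Type*} [MetricSpace X] [NormedAddCommGroup E]
    (T : ℝ → X → X) (evE : X → ℝ → E) (H : ℝ → Set X) (𝒟 : Set (ℝ → Set E))
    (P : ℝ → Set X) : Prop :=
  TCompact evE P ∧
    (∀ h : ℝ, 0 ≤ h → ∀ t : ℝ, T h '' P (t - h) ⊆ P t) ∧
    PullbackAttracting T (fun u => evE u 0) H 𝒟 P

/-! The shifted brochette `T(h)U`, `t ↦ T(h) U_{t-h}`, is again a pullback trajectory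
`𝒟`-semiattractor: compactness survives the continuous map `T(h)`, the bound `φ(t, ·)` is
replaced by `φ(t - h, · + h)`, semi-invariance follows from the semigroup law, and attraction
from uniform continuity of `T(h)` because `T(t - τ) = T(h) ∘ T(t - h - τ)`. Minimality of `U`
then gives `U ⊆ T(h)U`, and semi-invariance of `U` the reverse inclusion. -/

def shiftBrochette {X : Type*} (T : ℝ → X → X) (h : ℝ) (P : ℝ → Set X) : ℝ → Set X :=
  fun t => T h '' P (t - h)

theorem shiftBrochette_semiInvariant {X : Type*} {T : ℝ → X → X} {P : ℝ → Set X} {h : ℝ}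
    (hsemi : ∀ a b : ℝ, 0 ≤ a → 0 ≤ b → ∀ u, T a (T b u) = T (a + b) u)
    (hP : ∀ a : ℝ, 0 ≤ a → ∀ t : ℝ, T a '' P (t - a) ⊆ P t) (hh : 0 ≤ h) :
    ∀ a : ℝ, 0 ≤ a → ∀ t : ℝ,
      T a '' shiftBrochette T h P (t - a) ⊆ shiftBrochette T h P t := by
  rintro a ha t _ ⟨_, ⟨u, hu, rfl⟩, rfl⟩
  have hu' : u ∈ P (t - h - a) := by rwa [sub_right_comm]
  refine ⟨T a u, hP a ha (t - h) ⟨u, hu', rfl⟩, ?_⟩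
  rw [hsemi a h ha hh, hsemi h a hh ha, add_comm]

section Shift

variable {X E : Type*} [MetricSpace X] {T : ℝ → X → X} {evE : X → ℝ → E} {P : ℝ → Set X}
  {h : ℝ}

theorem TCompact.shiftBrochette [NormedAddCommGroup E] (hP : TCompact evE P) (hh : 0 ≤ h)
    (hT : Continuous (T h))
    (hev : ∀ u, ∀ s : ℝ, 0 ≤ s → evE (T h u) s = evE u (s + h)) :
    TCompact evE (shiftBrochette T h P) := by
  obtain ⟨hcomp, φ, hφ, hbound⟩ := hP
  refine ⟨fun t => (hcomp (t - h)).image hT, fun t s => φ (t - h) (s + h),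
    fun t => (hφ (t - h)).comp (continuous_add_const h), ?_⟩
  rintro t _ ⟨u, hu, rfl⟩ s hs
  rw [hev u s hs]
  exact hbound (t - h) u hu (s + h) (by linarith)

theorem PullbackAttracting.shiftBrochette {H : ℝ → Set X} {𝒟 : Set (ℝ → Set E)}
    (hP : PullbackAttracting T (fun u => evE u 0) H 𝒟 P) (hh : 0 ≤ h)
    (hT : UniformContinuous (T h))
    (hsemi : ∀ a b : ℝ, 0 ≤ a → 0 ≤ b → ∀ u, T a (T b u) = T (a + b) u) :
    PullbackAttracting T (fun u => evE u 0) H 𝒟 (shiftBrochette T h P) := by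
  intro D hD t ε hε
  obtain ⟨δ, hδ, hTδ⟩ := Metric.uniformContinuous_iff.mp hT ε hε
  obtain ⟨τ₁, hτ₁⟩ := hP D hD (t - h) δ hδ
  refine ⟨min τ₁ (t - h), fun τ hτ u hu => ?_⟩
  obtain ⟨v, hv, hdist⟩ := hτ₁ τ (hτ.trans (min_le_left _ _)) u hu
  have hsplit : T (t - τ) u = T h (T (t - h - τ) u) := by
    rw [hsemi h (t - h - τ) hh (by linarith [min_le_right τ₁ (t - h)])]
    ring_nf
  exact ⟨T h v, ⟨v, hv, rfl⟩, hsplit ▸ hTδ hdist⟩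

theorem IsPTSA.shiftBrochette [NormedAddCommGroup E] {H : ℝ → Set X} {𝒟 : Set (ℝ → Set E)}
    (hP : IsPTSA T evE H 𝒟 P) (hh : 0 ≤ h) (hT : UniformContinuous (T h))
    (hsemi : ∀ a b : ℝ, 0 ≤ a → 0 ≤ b → ∀ u, T a (T b u) = T (a + b) u)
    (hev : ∀ u, ∀ s : ℝ, 0 ≤ s → evE (T h u) s = evE u (s + h)) :
    IsPTSA T evE H 𝒟 (shiftBrochette T h P) :=
  ⟨hP.1.shiftBrochette hh hT.continuous hev, shiftBrochette_semiInvariant hsemi hP.2.1 hh,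
    hP.2.2.shiftBrochette hh hT hsemi⟩

end Shift

theorem stmt6_general {X E : Type*} [MetricSpace X] [NormedAddCommGroup E]
    (T : ℝ → X → X) (evE : X → ℝ → E) (H : ℝ → Set X) (𝒟 : Set (ℝ → Set E))
    (hsemi : ∀ a b : ℝ, 0 ≤ a → 0 ≤ b → ∀ u, T a (T b u) = T (a + b) u)
    (hlip : ∀ h : ℝ, 0 ≤ h → ∃ C > (0:ℝ), ∀ u v, dist (T h u) (T h v) ≤ C * dist u v)
    (hev : ∀ h : ℝ, 0 ≤ h → ∀ u, ∀ s : ℝ, 0 ≤ s → evE (T h u) s = evE u (s + h))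
    (U : ℝ → Set X)
    (hU : IsPTSA T evE H 𝒟 U)
    (hmin : ∀ P : ℝ → Set X, IsPTSA T evE H 𝒟 P → ∀ t, U t ⊆ P t) :
    ∀ h : ℝ, 0 ≤ h → ∀ t : ℝ, T h '' U (t - h) = U t := by
  intro h hh t
  obtain ⟨C, -, hC⟩ := hlip h hh
  have hT : UniformContinuous (T h) := (LipschitzWith.of_dist_le' hC).uniformContinuous
  exact (hU.2.1 h hh t).antisymm
    (hmin _ (hU.shiftBrochette hh hT hsemi (hev h hh)) t)

/-- Lemma 3.14: a minimal pullback trajectory `𝒟`-semiattractor is a pullback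
trajectory `𝒟`-attractor, i.e. it satisfies `T(h)U_{t-h} = U_t` for all `h ≥ 0`. -/
theorem stmt6 {X E : Type*} [MetricSpace X] [NormedAddCommGroup E]
    (T : ℝ → X → X) (evE : X → ℝ → E) (H : ℝ → Set X) (𝒟 : Set (ℝ → Set E))
    (hsemi : ∀ a b : ℝ, 0 ≤ a → 0 ≤ b → ∀ u, T a (T b u) = T (a + b) u)
    (hcont : ∀ h : ℝ, 0 ≤ h → Continuous (T h))
    (hlip : ∀ h : ℝ, 0 ≤ h → ∃ C > (0:ℝ), ∀ u v, dist (T h u) (T h v) ≤ C * dist u v)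
    (hev : ∀ h : ℝ, 0 ≤ h → ∀ u, ∀ s : ℝ, 0 ≤ s → evE (T h u) s = evE u (s + h))
    (U : ℝ → Set X)
    (hU : IsPTSA T evE H 𝒟 U)
    (hmin : ∀ P : ℝ → Set X, IsPTSA T evE H 𝒟 P → ∀ t, U t ⊆ P t) :
    ∀ h : ℝ, 0 ≤ h → ∀ t : ℝ, T h '' U (t - h) = U t :=
  stmt6_general T evE H 𝒟 hsemi hlip hev U hU hmin
end

section
/- Let u ∈ C([0,∞);H) with u(0) = a satisfy, for all h ≥ 0, the energy inequality ‖u(h)‖² ≤ e^{−σh}(‖a‖² + (1/η)∫₀ʰ e^{σξ}‖F(ξ)‖²_{V*} dξ). Fix t ∈ ℝ, let R₁(s) = e^{σs} + (1/η)∫_{−∞}^s e^{σξ}‖f(ξ)‖²_{V*} dξ where f satisfies ∫_{−∞}^t e^{σξ}‖f(ξ)‖²_{V*}dξ < ∞, let r ∈ R (so e^{σ·}r² is increasing and e^{σs}r²(s) → 0 as s → −∞), and suppose ‖a‖ ≤ r(τ) and F = T(τ)f. Then for τ ≤ τ₀ := χ^{−1}(R₁(t)) with χ(s) = max{e^{σs}r²(s),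 R₁(s)}, the shifted function v = T(t−τ)u satisfies ‖v(h)‖² ≤ 2e^{−σ(t+h)}R₁(t+h) for all h ≥ 0. -/
/-!
Shift the energy inequality from the time origin `τ` of the shifted problem to absolute time:
at time `t - τ + h` it reads
`‖v h‖² ≤ e^{-σ(t+h)} (e^{στ} ‖u 0‖² + (1/η) ∫_τ^{t+h} e^{σξ} ‖f ξ‖² dξ)`.
The initial term is at most `e^{στ} r(τ)² ≤ χ(τ) ≤ R₁(t)`, the forcing term at most `R₁(t+h)`,
and `R₁` is increasing, so each of the two terms is bounded by `R₁(t+h)`.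
-/

open MeasureTheory Filter Set Real

theorem setIntegral_Ioc_comp_add_right {E : Type*} [NormedAddCommGroup E] [NormedSpace ℝ E]
    (F : ℝ → E) {a b : ℝ} (hab : a ≤ b) (d : ℝ) :
    ∫ x in Ioc a b, F (x + d) = ∫ x in Ioc (a + d) (b + d), F x := by
  rw [← intervalIntegral.integral_of_le hab, ← intervalIntegral.integral_of_le (by linarith),
    intervalIntegral.integral_comp_add_right]

theorem setIntegral_Ioc_exp_mul_comp_add_right (σ τ : ℝ) {L : ℝ} (hL : 0 ≤ L) (g : ℝ → ℝ) :
    ∫ ξ in Ioc 0 L, exp (σ * ξ) * g (ξ + τ) =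
      exp (-(σ * τ)) * ∫ ξ in Ioc τ (L + τ), exp (σ * ξ) * g ξ := by
  calc ∫ ξ in Ioc 0 L, exp (σ * ξ) * g (ξ + τ)
      = ∫ ξ in Ioc 0 L, exp (-(σ * τ)) * (exp (σ * (ξ + τ)) * g (ξ + τ)) := by
        congr 1; funext ξ; rw [← mul_assoc, ← exp_add]; ring_nf
    _ = exp (-(σ * τ)) * ∫ ξ in Ioc τ (L + τ), exp (σ * ξ) * g ξ := by
        rw [integral_const_mul, setIntegral_Ioc_comp_add_right (fun ξ => exp (σ * ξ) * g ξ) hL,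
          zero_add]

theorem monotone_exp_mul_add_integral_Iic {σ c : ℝ} (hσ : 0 ≤ σ) (hc : 0 ≤ c) {G : ℝ → ℝ}
    (hG : 0 ≤ G) (hInt : ∀ s, IntegrableOn G (Iic s)) :
    Monotone fun s => exp (σ * s) + c * ∫ ξ in Iic s, G ξ := by
  intro a b hab
  have hexp : exp (σ * a) ≤ exp (σ * b) := exp_le_exp.2 (mul_le_mul_of_nonneg_left hab hσ)
  have hint : ∫ ξ in Iic a, G ξ ≤ ∫ ξ in Iic b, G ξ :=
    setIntegral_mono_set (hInt b) (.of_forall hG) (Iic_subset_Iic.2 hab).eventuallyLE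
  dsimp only
  gcongr

theorem stmt10_general {H Vs : Type*} [NormedAddCommGroup H] [NormedAddCommGroup Vs]
    (σ η : ℝ) (hσ : 0 < σ) (hη : 0 < η)
    (f : ℝ → Vs)
    (hInt : ∀ s : ℝ, IntegrableOn (fun ξ => Real.exp (σ * ξ) * ‖f ξ‖ ^ 2) (Set.Iic s))
    (R₁ : ℝ → ℝ)
    (hR₁ : ∀ s : ℝ, R₁ s =
      Real.exp (σ * s) + (1 / η) * ∫ ξ in Set.Iic s, Real.exp (σ * ξ) * ‖f ξ‖ ^ 2)
    (r : ℝ → ℝ)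
    (t τ : ℝ) (hτt : τ ≤ t)
    (hχ : max (Real.exp (σ * τ) * r τ ^ 2) (R₁ τ) ≤ R₁ t)
    (u : ℝ → H)
    (ha : ‖u 0‖ ≤ r τ)
    (hener : ∀ h : ℝ, 0 ≤ h → ‖u h‖ ^ 2 ≤
      Real.exp (-(σ * h)) * (‖u 0‖ ^ 2 +
        (1 / η) * ∫ ξ in Set.Ioc (0:ℝ) h, Real.exp (σ * ξ) * ‖f (ξ + τ)‖ ^ 2)) :
    ∀ h : ℝ, 0 ≤ h →
      ‖u (t - τ + h)‖ ^ 2 ≤ 2 * Real.exp (-(σ * (t + h))) * R₁ (t + h) := by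
  intro h hh
  have hL : 0 ≤ t - τ + h := by linarith
  have hG : 0 ≤ fun ξ => exp (σ * ξ) * ‖f ξ‖ ^ 2 := fun ξ => by positivity
  have hR₁mono : Monotone R₁ := by
    have := monotone_exp_mul_add_integral_Iic hσ.le (one_div_pos.2 hη).le hG hInt
    rwa [← funext hR₁] at this
  set I := ∫ ξ in Ioc τ (t + h), exp (σ * ξ) * ‖f ξ‖ ^ 2
  have hforcing : 1 / η * I ≤ R₁ (t + h) := by
    have hI : I ≤ ∫ ξ in Iic (t + h), exp (σ * ξ) * ‖f ξ‖ ^ 2 :=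
      setIntegral_mono_set (hInt _) (.of_forall hG) Ioc_subset_Iic_self.eventuallyLE
    rw [hR₁]
    linarith [mul_le_mul_of_nonneg_left hI (one_div_pos.2 hη).le, exp_pos (σ * (t + h))]
  have hinitial : exp (σ * τ) * ‖u 0‖ ^ 2 ≤ R₁ (t + h) :=
    calc exp (σ * τ) * ‖u 0‖ ^ 2 ≤ exp (σ * τ) * r τ ^ 2 := by gcongr
      _ ≤ R₁ t := le_of_max_le_left hχ
      _ ≤ R₁ (t + h) := hR₁mono (by linarith)
  have hshift := setIntegral_Ioc_exp_mul_comp_add_right σ τ hL (fun ξ => ‖f ξ‖ ^ 2)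
  rw [show t - τ + h + τ = t + h by ring] at hshift
  calc ‖u (t - τ + h)‖ ^ 2
      ≤ exp (-(σ * (t - τ + h))) * (‖u 0‖ ^ 2 + 1 / η * (exp (-(σ * τ)) * I)) := by
        rw [← hshift]; exact hener _ hL
    _ = exp (-(σ * (t + h))) * (exp (σ * τ) * ‖u 0‖ ^ 2 + 1 / η * I) := by
        rw [show -(σ * (t - τ + h)) = -(σ * (t + h)) + σ * τ by ring, exp_add, exp_neg (σ * τ)]
        field_simp
    _ ≤ exp (-(σ * (t + h))) * (R₁ (t + h) + R₁ (t + h)) := by gcongr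
    _ = 2 * exp (-(σ * (t + h))) * R₁ (t + h) := by ring

/-- Pullback absorption estimate for the 3D Navier–Stokes energy inequality
(proof of Theorem 4.3): if `u` is an admissible weak solution of the problem shifted
by `τ` (only the energy inequality with the right-hand side `F = T(τ)f` is used),
with `‖u(0)‖ ≤ r(τ)` for `r` in the class `𝓡`, and if `τ ≤ t` satisfies
`χ(τ) ≤ R₁(t)` with `χ(s) = max{e^{σs}r²(s), R₁(s)}`, then the shifted solution
`v = T(t-τ)u` satisfies `‖v(h)‖² ≤ 2e^{-σ(t+h)}R₁(t+h)` for all `h ≥ 0`. -/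
theorem stmt10 {H Vs : Type*} [NormedAddCommGroup H] [NormedAddCommGroup Vs]
    (σ η : ℝ) (hσ : 0 < σ) (hη : 0 < η)
    (f : ℝ → Vs)
    (hInt : ∀ s : ℝ, IntegrableOn (fun ξ => Real.exp (σ * ξ) * ‖f ξ‖ ^ 2) (Set.Iic s))
    (R₁ : ℝ → ℝ)
    (hR₁ : ∀ s : ℝ, R₁ s =
      Real.exp (σ * s) + (1 / η) * ∫ ξ in Set.Iic s, Real.exp (σ * ξ) * ‖f ξ‖ ^ 2)
    (r : ℝ → ℝ) (hrpos : ∀ s, 0 < r s)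
    (hrmono : Monotone fun s => Real.exp (σ * s) * r s ^ 2)
    (hrlim : Tendsto (fun s => Real.exp (σ * s) * r s ^ 2) atBot (nhds 0))
    (t τ : ℝ) (hτt : τ ≤ t)
    (hχ : max (Real.exp (σ * τ) * r τ ^ 2) (R₁ τ) ≤ R₁ t)
    (u : ℝ → H)
    (ha : ‖u 0‖ ≤ r τ)
    (hener : ∀ h : ℝ, 0 ≤ h → ‖u h‖ ^ 2 ≤
      Real.exp (-(σ * h)) * (‖u 0‖ ^ 2 +
        (1 / η) * ∫ ξ in Set.Ioc (0:ℝ) h, Real.exp (σ * ξ) * ‖f (ξ + τ)‖ ^ 2)) :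
    ∀ h : ℝ, 0 ≤ h →
      ‖u (t - τ + h)‖ ^ 2 ≤ 2 * Real.exp (-(σ * (t + h))) * R₁ (t + h) :=
  stmt10_general σ η hσ hη f hInt R₁ hR₁ r t τ hτt hχ u ha hener
end

section
/- Let τ₀: D × ℝ → ℝ with τ₀(D,·) non-decreasing for each D, and define P⁰_t = ⋃_{D∈D} ⋃_{τ ≤ τ₀(D,t)} T(t−τ)H_τ(D). Then T(h)P⁰_{t−h} ⊂ P⁰_t for all h ≥ 0 and t ∈ ℝ, and consequently the closures P_t of P⁰_t in C([0,∞);E₀) satisfy T(h)P_{t−h} ⊂ P_t. -/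
open Set

section Semigroup

variable {X : Type*} {T : ℝ → X → X}

theorem image_image_of_semigroup
    (hsemi : ∀ a b : ℝ, 0 ≤ a → 0 ≤ b → ∀ u, T a (T b u) = T (a + b) u)
    {a b : ℝ} (ha : 0 ≤ a) (hb : 0 ≤ b) (A : Set X) :
    T a '' (T b '' A) = T (a + b) '' A := by
  rw [image_image]
  exact image_congr fun u _ => hsemi a b ha hb u

theorem image_iUnion_shift_subset
    (hsemi : ∀ a b : ℝ, 0 ≤ a → 0 ≤ b → ∀ u, T a (T b u) = T (a + b) u)
    {ι : Type*} (I : Set ι) (S : ι → ℝ → Set X) (τ₀ : ι → ℝ → ℝ)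
    (hτmono : ∀ i, Monotone (τ₀ i)) (hτle : ∀ i t, τ₀ i t ≤ t) {h : ℝ} (hh : 0 ≤ h) (t : ℝ) :
    T h '' (⋃ i ∈ I, ⋃ τ ∈ Iic (τ₀ i (t - h)), T (t - h - τ) '' S i τ) ⊆
      ⋃ i ∈ I, ⋃ τ ∈ Iic (τ₀ i t), T (t - τ) '' S i τ := by
  simp only [image_iUnion]
  refine iUnion₂_subset fun i hi => iUnion₂_subset fun τ hτ => ?_
  have hτt : τ ∈ Iic (τ₀ i t) := mem_Iic.2 (hτ.trans (hτmono i (sub_le_self t hh)))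
  have hlag : 0 ≤ t - h - τ := sub_nonneg.2 (hτ.trans (hτle i _))
  have hsum : h + (t - h - τ) = t - τ := by ring
  rw [image_image_of_semigroup hsemi hh hlag, hsum]
  exact subset_iUnion₂_of_subset i hi (subset_iUnion₂_of_subset τ hτt subset_rfl)

end Semigroup

/-- From the proof of Lemma 3.18: let `X` model the trajectory space `C([0,∞);E₀)`,
`T` the (continuous) translation semigroup, `H` the trajectory brochette, `ev0` the
evaluation at `0` with values in `E`, `𝒟` a class of brochettes over `E`, and
`τ₀(D,t) ≤ t` nondecreasing in `t`.  Set
`P⁰_t = ⋃_{D ∈ 𝒟} ⋃_{τ ≤ τ₀(D,t)} T(t-τ)H_τ(D)`.  Then `T(h)P⁰_{t-h} ⊆ P⁰_t` for all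
`h ≥ 0`, and consequently the closures satisfy `T(h) (cl P⁰_{t-h}) ⊆ cl P⁰_t`. -/
theorem stmt18 {X E : Type*} [MetricSpace X]
    (T : ℝ → X → X)
    (hsemi : ∀ a b : ℝ, 0 ≤ a → 0 ≤ b → ∀ u, T a (T b u) = T (a + b) u)
    (hcont : ∀ h : ℝ, 0 ≤ h → Continuous (T h))
    (ev0 : X → E) (H : ℝ → Set X) (𝒟 : Set (ℝ → Set E))
    (τ₀ : (ℝ → Set E) → ℝ → ℝ)
    (hτmono : ∀ D, Monotone (τ₀ D))
    (hτle : ∀ D t, τ₀ D t ≤ t)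
    (P0 : ℝ → Set X)
    (hP0 : ∀ t : ℝ, P0 t =
      ⋃ D ∈ 𝒟, ⋃ τ ∈ Set.Iic (τ₀ D t), T (t - τ) '' {u ∈ H τ | ev0 u ∈ D τ}) :
    ∀ h : ℝ, 0 ≤ h → ∀ t : ℝ,
      T h '' P0 (t - h) ⊆ P0 t ∧
      T h '' closure (P0 (t - h)) ⊆ closure (P0 t) := by
  intro h hh t
  have hshift : T h '' P0 (t - h) ⊆ P0 t := by
    rw [hP0, hP0]
    exact image_iUnion_shift_subset hsemi 𝒟 (fun D τ => {u ∈ H τ | ev0 u ∈ D τ}) τ₀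
      hτmono hτle hh t
  exact ⟨hshift, (image_closure_subset_closure_image (hcont h hh)).trans (closure_mono hshift)⟩
end
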